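/- arXiv:0806.2765 — 3 statements merged into one kernel-verified Lean document; each statement's English description precedes it below -/
import Mathlib

section
/- Suppose u : ℝ × ℝ → ℝ is a smooth solution of u_t = -1/u_xx with u_xx(t,x) ≠ 0 everywhere. Define the Legendre transform: assume there is a smooth map (t,p) ↦ ξ(t,p) with u_x(t, ξ(t,p)) = p for all (t,p), and set w(t,p) = ξ(t,p)·p - u(t, ξ(t,p)). Then w satisfies the heat equation w_t = w_pp. -/
noncomputable def pdt (f : ℝ × ℝ → ℝ) : ℝ × ℝ → ℝ :=
  fun p => deriv (fun s => f (s, p.2)) p.1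

noncomputable def pdx (f : ℝ × ℝ → ℝ) : ℝ × ℝ → ℝ :=
  fun p => deriv (fun y => f (p.1, y)) p.2

lemma fderiv_pair (L : ℝ × ℝ →L[ℝ] ℝ) (a b : ℝ) :
    L (a, b) = a * L (1, 0) + b * L (0, 1) := by
  have h : (a, b) = a • ((1:ℝ), (0:ℝ)) + b • ((0:ℝ), (1:ℝ)) := by
    simp [Prod.ext_iff]
  rw [h, map_add, map_smul, map_smul, smul_eq_mul, smul_eq_mul]

lemma hasDerivAt_comp2 {f : ℝ × ℝ → ℝ} (hf : Differentiable ℝ f)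
    {c₁ c₂ : ℝ → ℝ} {c₁' c₂' y : ℝ}
    (h1 : HasDerivAt c₁ c₁' y) (h2 : HasDerivAt c₂ c₂' y) :
    HasDerivAt (fun s => f (c₁ s, c₂ s))
      (fderiv ℝ f (c₁ y, c₂ y) (c₁', c₂')) y :=
  (hf _).hasFDerivAt.comp_hasDerivAt y (h1.prodMk h2)

lemma hslicex {f : ℝ × ℝ → ℝ} (hf : Differentiable ℝ f) (t x : ℝ) :
    HasDerivAt (fun y => f (t, y)) (fderiv ℝ f (t, x) (0, 1)) x := by
  simpa using hasDerivAt_comp2 hf (hasDerivAt_const x t) (hasDerivAt_id x)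

lemma hslicet {f : ℝ × ℝ → ℝ} (hf : Differentiable ℝ f) (t x : ℝ) :
    HasDerivAt (fun s => f (s, x)) (fderiv ℝ f (t, x) (1, 0)) t := by
  simpa using hasDerivAt_comp2 hf (hasDerivAt_id t) (hasDerivAt_const t x)

/-- The Legendre transformation maps u_t = -1/u_xx to the heat equation. -/
theorem legendre_linearizes (u ξ : ℝ × ℝ → ℝ)
    (hu : ContDiff ℝ (⊤ : ℕ∞) u) (hξ : ContDiff ℝ (⊤ : ℕ∞) ξ)
    (huxx : ∀ p : ℝ × ℝ, pdx (pdx u) p ≠ 0)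
    (heq : ∀ p : ℝ × ℝ, pdt u p = -1 / pdx (pdx u) p)
    (hleg : ∀ t q : ℝ, pdx u (t, ξ (t, q)) = q) :
    ∀ p : ℝ × ℝ,
      pdt (fun r => ξ r * r.2 - u (r.1, ξ r)) p
        = pdx (pdx (fun r => ξ r * r.2 - u (r.1, ξ r))) p := by
  have hud : Differentiable ℝ u := hu.differentiable (by simp)
  have hξd : Differentiable ℝ ξ := hξ.differentiable (by simp)
  set X : ℝ × ℝ → ℝ := fun p => fderiv ℝ u p (0, 1) with hXdef
  have hXsmooth : ContDiff ℝ (⊤ : ℕ∞) X := (hu.fderiv_right (by simp)).clm_apply contDiff_const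
  have hXd : Differentiable ℝ X := hXsmooth.differentiable (by simp)
  set Xx : ℝ × ℝ → ℝ := fun p => fderiv ℝ X p (0, 1) with hXxdef
  have hpdxu : ∀ p : ℝ × ℝ, pdx u p = X p := by
    intro p
    have := (hslicex hud p.1 p.2).deriv
    simpa [pdx, hXdef] using this
  have hpdxxu : ∀ p : ℝ × ℝ, pdx (pdx u) p = Xx p := by
    intro p
    have hfun : pdx u = X := funext hpdxu
    show deriv (fun y => pdx u (p.1, y)) p.2 = Xx p
    rw [hfun]
    have := (hslicex hXd p.1 p.2).deriv
    simpa [hXxdef] using this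
  have hXval : ∀ t q : ℝ, X (t, ξ (t, q)) = q := fun t q =>
    (hpdxu _).symm.trans (hleg t q)
  have hXxne : ∀ p : ℝ × ℝ, Xx p ≠ 0 := fun p => (hpdxxu p) ▸ huxx p
  -- key : ξ_q * u_xx(t, ξ) = 1
  have key : ∀ t q : ℝ, fderiv ℝ ξ (t, q) (0, 1) * Xx (t, ξ (t, q)) = 1 := by
    intro t q
    have hξq := hslicex hξd t q
    have h1 : HasDerivAt (fun y => X (t, ξ (t, y)))
        (fderiv ℝ X (t, ξ (t, q)) (0, fderiv ℝ ξ (t, q) (0, 1))) q :=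
      hasDerivAt_comp2 hXd (hasDerivAt_const q t) hξq
    have hfun : (fun y => X (t, ξ (t, y))) = fun y : ℝ => y := by
      funext y; exact hXval t y
    rw [hfun] at h1
    have h3 := h1.unique (hasDerivAt_id q)
    rw [fderiv_pair] at h3
    have h4 : Xx (t, ξ (t, q)) = (fderiv ℝ X (t, ξ (t, q))) (0, 1) := by rw [hXxdef]
    rw [h4]; linarith [h3]
  -- pdx w = ξ pointwise
  have hw1 : ∀ t q : ℝ,
      pdx (fun r => ξ r * r.2 - u (r.1, ξ r)) (t, q) = ξ (t, q) := by
    intro t q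
    have hξq := hslicex hξd t q
    have hmul : HasDerivAt (fun y => ξ (t, y) * y)
        (fderiv ℝ ξ (t, q) (0, 1) * q + ξ (t, q) * 1) q := hξq.mul (hasDerivAt_id q)
    have hA : fderiv ℝ u (t, ξ (t, q)) (0, fderiv ℝ ξ (t, q) (0, 1))
        = fderiv ℝ ξ (t, q) (0, 1) * q := by
      rw [fderiv_pair]
      have hX : (fderiv ℝ u (t, ξ (t, q))) (0, 1) = q := hXval t q
      rw [hX]; ring
    have hucomp : HasDerivAt (fun y => u (t, ξ (t, y)))
        (fderiv ℝ ξ (t, q) (0, 1) * q) q := by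
      rw [← hA]; exact hasDerivAt_comp2 hud (hasDerivAt_const q t) hξq
    have hd := (hmul.sub hucomp).deriv
    show deriv (fun y => ξ (t, y) * y - u (t, ξ (t, y))) q = ξ (t, q)
    refine hd.trans ?_; ring
  intro p
  obtain ⟨t, q⟩ := p
  have hRHS : pdx (pdx (fun r => ξ r * r.2 - u (r.1, ξ r))) (t, q)
      = fderiv ℝ ξ (t, q) (0, 1) := by
    have hfun : (fun y => pdx (fun r => ξ r * r.2 - u (r.1, ξ r)) (t, y))
        = fun y => ξ (t, y) := funext fun y => hw1 t y
    show deriv (fun y => pdx (fun r => ξ r * r.2 - u (r.1, ξ r)) (t, y)) q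
        = fderiv ℝ ξ (t, q) (0, 1)
    rw [hfun]
    exact (hslicex hξd t q).deriv
  have hpt : pdt u (t, ξ (t, q)) = fderiv ℝ u (t, ξ (t, q)) (1, 0) := by
    have := (hslicet hud t (ξ (t, q))).deriv
    simpa [pdt] using this
  have hξt := hslicet hξd t q
  have hmul : HasDerivAt (fun s => ξ (s, q) * q)
      (fderiv ℝ ξ (t, q) (1, 0) * q) t := hξt.mul_const q
  have hA : fderiv ℝ u (t, ξ (t, q)) (1, fderiv ℝ ξ (t, q) (1, 0))
      = fderiv ℝ u (t, ξ (t, q)) (1, 0) + fderiv ℝ ξ (t, q) (1, 0) * q := by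
    rw [fderiv_pair]
    have hX : (fderiv ℝ u (t, ξ (t, q))) (0, 1) = q := hXval t q
    rw [hX]; ring
  have hucomp : HasDerivAt (fun s => u (s, ξ (s, q)))
      (fderiv ℝ u (t, ξ (t, q)) (1, 0) + fderiv ℝ ξ (t, q) (1, 0) * q) t := by
    rw [← hA]
    simpa using hasDerivAt_comp2 hud (hasDerivAt_id t) hξt
  have hd := (hmul.sub hucomp).deriv
  have hLHS : pdt (fun r => ξ r * r.2 - u (r.1, ξ r)) (t, q)
      = -(fderiv ℝ u (t, ξ (t, q)) (1, 0)) := by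
    show deriv (fun s => ξ (s, q) * q - u (s, ξ (s, q))) t
        = -(fderiv ℝ u (t, ξ (t, q)) (1, 0))
    refine hd.trans ?_; ring
  rw [hLHS, hRHS]
  have h1 : fderiv ℝ u (t, ξ (t, q)) (1, 0) = -1 / Xx (t, ξ (t, q)) := by
    rw [← hpt, heq, hpdxxu]
  rw [h1]
  have h2 := key t q
  have h3 := hXxne (t, ξ (t, q))
  field_simp
  linarith [h2]
end

section
/- Let σ : ℝ × ℝ → ℝ be a smooth solution of the backward heat equation σ_t + σ_ωω = 0, and let u be a smooth solution of u_t = u_xx/u_x² with u_x ≠ 0 everywhere. Then F(t,x) = σ(t, u(t,x)) and G(t,x) = σ_ω(t, u(t,x)) / u_x(t,x) satisfy ∂F/∂t + ∂G/∂x = 0. -/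
lemma hasDerivAt_slice_t (f : ℝ × ℝ → ℝ) (p : ℝ × ℝ) (hf : DifferentiableAt ℝ f p) :
    HasDerivAt (fun s => f (s, p.2)) (fderiv ℝ f p (1, 0)) p.1 := by
  have h1 : HasDerivAt (fun s : ℝ => (s, p.2)) ((1 : ℝ), (0 : ℝ)) p.1 :=
    (hasDerivAt_id p.1).prodMk (hasDerivAt_const p.1 p.2)
  exact hf.hasFDerivAt.comp_hasDerivAt p.1 h1

lemma hasDerivAt_slice_x (f : ℝ × ℝ → ℝ) (p : ℝ × ℝ) (hf : DifferentiableAt ℝ f p) :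
    HasDerivAt (fun y => f (p.1, y)) (fderiv ℝ f p (0, 1)) p.2 := by
  have h1 : HasDerivAt (fun y : ℝ => (p.1, y)) ((0 : ℝ), (1 : ℝ)) p.2 :=
    (hasDerivAt_const p.2 p.1).prodMk (hasDerivAt_id p.2)
  exact hf.hasFDerivAt.comp_hasDerivAt p.2 h1

lemma pdt_eq (f : ℝ × ℝ → ℝ) (p : ℝ × ℝ) (hf : DifferentiableAt ℝ f p) :
    pdt f p = fderiv ℝ f p (1, 0) :=
  (hasDerivAt_slice_t f p hf).deriv

lemma pdx_eq (f : ℝ × ℝ → ℝ) (p : ℝ × ℝ) (hf : DifferentiableAt ℝ f p) :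
    pdx f p = fderiv ℝ f p (0, 1) :=
  (hasDerivAt_slice_x f p hf).deriv

lemma contDiff_pdx (f : ℝ × ℝ → ℝ) (hf : ContDiff ℝ (⊤ : ℕ∞) f) : ContDiff ℝ (⊤ : ℕ∞) (pdx f) := by
  have h : pdx f = fun p => fderiv ℝ f p (0, 1) := by
    funext p
    exact pdx_eq f p (hf.differentiable (by simp) p)
  rw [h]
  exact (hf.fderiv_right (by simp)).clm_apply contDiff_const

lemma fderiv_apply_pair (f : ℝ × ℝ → ℝ) (p : ℝ × ℝ) (hf : DifferentiableAt ℝ f p) (a b : ℝ) :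
    fderiv ℝ f p (a, b) = a * pdt f p + b * pdx f p := by
  have hab : (a, b) = a • ((1 : ℝ), (0 : ℝ)) + b • ((0 : ℝ), (1 : ℝ)) := by
    simp [Prod.ext_iff]
  rw [pdt_eq f p hf, pdx_eq f p hf, hab, map_add, map_smul, map_smul]
  simp [smul_eq_mul]

/-- (σ(t,u), σ_ω(t,u)/u_x) is a conserved vector for u_t = u_xx/u_x². -/
theorem conserved_vectors_L1 (σ u : ℝ × ℝ → ℝ)
    (hσ : ContDiff ℝ (⊤ : ℕ∞) σ) (hu : ContDiff ℝ (⊤ : ℕ∞) u)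
    (hbackward : ∀ p : ℝ × ℝ, pdt σ p + pdx (pdx σ) p = 0)
    (hux : ∀ p : ℝ × ℝ, pdx u p ≠ 0)
    (heq : ∀ p : ℝ × ℝ, pdt u p = pdx (pdx u) p / (pdx u p) ^ 2) :
    ∀ p : ℝ × ℝ,
      pdt (fun q => σ (q.1, u q)) p
        + pdx (fun q => pdx σ (q.1, u q) / pdx u q) p = 0 := by
  intro p
  have hσd := hσ.differentiable (by simp)
  have hud := hu.differentiable (by simp)
  have hσω : ContDiff ℝ (⊤ : ℕ∞) (pdx σ) := contDiff_pdx σ hσ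
  have hσωd := hσω.differentiable (by simp)
  have huxd := (contDiff_pdx u hu).differentiable (by simp)
  set q : ℝ × ℝ := (p.1, u p) with hq
  -- F term
  have hγt : HasDerivAt (fun s : ℝ => (s, u (s, p.2))) ((1 : ℝ), pdt u p) p.1 := by
    have := hasDerivAt_slice_t u p (hud p)
    rw [← pdt_eq u p (hud p)] at this
    exact (hasDerivAt_id p.1).prodMk this
  have hF : HasDerivAt (fun s : ℝ => σ (s, u (s, p.2)))
      (fderiv ℝ σ q (1, pdt u p)) p.1 :=
    (hσd q).hasFDerivAt.comp_hasDerivAt p.1 hγt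
  have hFval : pdt (fun q : ℝ × ℝ => σ (q.1, u q)) p
      = pdt σ q + pdt u p * pdx σ q := by
    have := hF.deriv
    rw [fderiv_apply_pair σ q (hσd q) 1 (pdt u p)] at this
    simpa [pdt] using this
  -- G term
  have hγx : HasDerivAt (fun y : ℝ => (p.1, u (p.1, y))) ((0 : ℝ), pdx u p) p.2 := by
    have := hasDerivAt_slice_x u p (hud p)
    rw [← pdx_eq u p (hud p)] at this
    exact (hasDerivAt_const p.2 p.1).prodMk this
  have hA : HasDerivAt (fun y : ℝ => pdx σ (p.1, u (p.1, y)))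
      (fderiv ℝ (pdx σ) q (0, pdx u p)) p.2 :=
    (hσωd q).hasFDerivAt.comp_hasDerivAt_of_eq p.2 hγx rfl
  have hB : HasDerivAt (fun y : ℝ => pdx u (p.1, y)) (pdx (pdx u) p) p.2 := by
    have := hasDerivAt_slice_x (pdx u) p (huxd p)
    rwa [← pdx_eq (pdx u) p (huxd p)] at this
  have hApB : HasDerivAt (fun y : ℝ => pdx σ (p.1, u (p.1, y)) / pdx u (p.1, y))
      ((fderiv ℝ (pdx σ) q (0, pdx u p) * pdx u p
        - pdx σ q * pdx (pdx u) p) / (pdx u p) ^ 2) p.2 := by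
    have := hA.div hB (hux p)
    exact this
  have hGval : pdx (fun r : ℝ × ℝ => pdx σ (r.1, u r) / pdx u r) p
      = (fderiv ℝ (pdx σ) q (0, pdx u p) * pdx u p
        - pdx σ q * pdx (pdx u) p) / (pdx u p) ^ 2 := by
    simpa [pdx] using hApB.deriv
  have hAfd : fderiv ℝ (pdx σ) q (0, pdx u p) = pdx u p * pdx (pdx σ) q := by
    rw [fderiv_apply_pair (pdx σ) q (hσωd q) 0 (pdx u p)]
    ring
  rw [hFval, hGval, hAfd, heq p]
  have hb := hbackward q
  have hx := hux p
  field_simp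
  nlinarith [sq_nonneg (pdx u p), hb, mul_self_nonneg (pdx u p)]
end

section
/- Let X, U, Φ : ℝ⁴ → ℝ be smooth in (t,x,v,p) and F = F(t,x,v,p) smooth. Then the combined system consisting of the contact condition (U_x + U_v·p)·X_p = (X_x + X_v·p)·U_p together with the two equations Φ_x + U·X_x + (Φ_v + U·X_v)·p = F and Φ_p + U·X_p = 0 (all holding identically in (t,x,v,p)) is equivalent to the system of three equations: Φ_x + U·X_x = F - p·F_p, Φ_v + U·X_v = F_p, Φ_p + U·X_p = 0. -/
noncomputable section SystemsEquivAux

abbrev E4 : Type := ℝ × ℝ × ℝ × ℝ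

/-- Directional (partial) derivative of `f` in direction `u`. -/
noncomputable def pd (u : E4) (f : E4 → ℝ) (q : E4) : ℝ := fderiv ℝ f q u

lemma pd_contDiff {f : E4 → ℝ} (hf : ContDiff ℝ (⊤ : ℕ∞) f) (u : E4) :
    ContDiff ℝ (⊤ : ℕ∞) (pd u f) :=
  (hf.fderiv_right (by simp)).clm_apply contDiff_const

lemma pd_diff {f : E4 → ℝ} (hf : ContDiff ℝ (⊤ : ℕ∞) f) (u : E4) :
    Differentiable ℝ (pd u f) :=
  (pd_contDiff hf u).differentiable (by simp)

lemma pd_comm {f : E4 → ℝ} (hf : ContDiff ℝ (⊤ : ℕ∞) f) (u w q : E4) :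
    pd w (pd u f) q = pd u (pd w f) q := by
  have hd : Differentiable ℝ (fderiv ℝ f) := (hf.fderiv_right (m := (⊤ : ℕ∞)) (by simp)).differentiable (by simp)
  have key : ∀ a b : E4, pd b (pd a f) q = fderiv ℝ (fderiv ℝ f) q b a := by
    intro a b
    have : pd a f = fun y => (fderiv ℝ f y) ((fun _ : E4 => a) y) := rfl
    rw [pd, this, fderiv_clm_apply (hd q) (differentiableAt_const a)]
    simp
  rw [key u w, key w u]
  exact ((hf.contDiffAt).isSymmSndFDerivAt (by rw [minSmoothness_of_isRCLikeNormedField]; exact WithTop.coe_le_coe.mpr le_top)) w u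

lemma pd_add {f g : E4 → ℝ} (hf : Differentiable ℝ f) (hg : Differentiable ℝ g)
    (u q : E4) : pd u (fun y => f y + g y) q = pd u f q + pd u g q := by
  simp [pd, fderiv_fun_add (hf q) (hg q)]

lemma pd_mul {f g : E4 → ℝ} (hf : Differentiable ℝ f) (hg : Differentiable ℝ g)
    (u q : E4) : pd u (fun y => f y * g y) q = pd u f q * g q + f q * pd u g q := by
  rw [pd, fderiv_fun_mul (hf q) (hg q)]
  simp only [ContinuousLinearMap.add_apply, ContinuousLinearMap.smul_apply, smul_eq_mul, pd]
  ring

lemma pd_P (u q : E4) : pd u (fun y : E4 => y.2.2.2) q = u.2.2.2 := by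
  have : (fun y : E4 => y.2.2.2)
      = ⇑((ContinuousLinearMap.snd ℝ ℝ ℝ).comp
        ((ContinuousLinearMap.snd ℝ ℝ (ℝ × ℝ)).comp (ContinuousLinearMap.snd ℝ ℝ (ℝ × ℝ × ℝ)))) := rfl
  rw [pd, this, ContinuousLinearMap.fderiv]
  rfl

lemma pd_const (u q : E4) : pd u (fun _ : E4 => (0 : ℝ)) q = 0 := by
  simp [pd]

lemma pd_congr {f g : E4 → ℝ} (h : ∀ q, f q = g q) (u q : E4) :
    pd u f q = pd u g q := by rw [show f = g from funext h]

lemma diffP : Differentiable ℝ (fun y : E4 => y.2.2.2) :=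
  differentiable_id.snd.snd.snd

/-- Expansion of the directional derivative of `a + b*c`. -/
lemma pd_expand_ac {a b c : E4 → ℝ} (ha : Differentiable ℝ a) (hb : Differentiable ℝ b)
    (hc : Differentiable ℝ c) (u q : E4) :
    pd u (fun y => a y + b y * c y) q
      = pd u a q + (pd u b q * c q + b q * pd u c q) := by
  have e1 : pd u (fun y => a y + b y * c y) q
      = pd u a q + pd u (fun y => b y * c y) q := pd_add ha (hb.mul hc) u q
  rw [e1, pd_mul hb hc u q]

/-- Expansion of the directional derivative of `a + b*c + (d + b*e)*p`. -/
lemma pd_expand9 {a b c d e : E4 → ℝ} (ha : Differentiable ℝ a) (hb : Differentiable ℝ b)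
    (hc : Differentiable ℝ c) (hd : Differentiable ℝ d) (he : Differentiable ℝ e) (u q : E4) :
    pd u (fun y => a y + b y * c y + (d y + b y * e y) * y.2.2.2) q
      = pd u a q + (pd u b q * c q + b q * pd u c q)
        + ((pd u d q + (pd u b q * e q + b q * pd u e q)) * q.2.2.2
            + (d q + b q * e q) * u.2.2.2) := by
  have e1 : pd u (fun y => a y + b y * c y + (d y + b y * e y) * y.2.2.2) q
      = pd u (fun y => a y + b y * c y) q
        + pd u (fun y => (d y + b y * e y) * y.2.2.2) q :=
    pd_add (ha.add (hb.mul hc)) ((hd.add (hb.mul he)).mul diffP) u q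
  have e2 : pd u (fun y => (d y + b y * e y) * y.2.2.2) q
      = pd u (fun y => d y + b y * e y) q * q.2.2.2
        + (d q + b q * e q) * pd u (fun y : E4 => y.2.2.2) q :=
    pd_mul (hd.add (hb.mul he)) diffP u q
  rw [e1, e2, pd_expand_ac ha hb hc u q, pd_expand_ac hd hb he u q, pd_P]

/-- Expansion of the directional derivative of `f - p * g`. -/
lemma pd_expandF {f g : E4 → ℝ} (hf : Differentiable ℝ f) (hg : Differentiable ℝ g)
    (u q : E4) :
    pd u (fun y => f y - y.2.2.2 * g y) q
      = pd u f q - (u.2.2.2 * g q + q.2.2.2 * pd u g q) := by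
  have e1 : pd u (fun y => f y - y.2.2.2 * g y) q
      = pd u f q - pd u (fun y : E4 => y.2.2.2 * g y) q := by
    simp [pd, fderiv_fun_sub (hf q) (show DifferentiableAt ℝ (fun y : E4 => y.2.2.2 * g y) q from (diffP.mul hg) q)]
  have e2 : pd u (fun y : E4 => y.2.2.2 * g y) q
      = pd u (fun y : E4 => y.2.2.2) q * g q + q.2.2.2 * pd u g q :=
    pd_mul diffP hg u q
  rw [e1, e2, pd_P]

/-- The equivalence, phrased with directional derivatives on `E4`. -/
lemma key (X U Φ F : E4 → ℝ)
    (hX : ContDiff ℝ (⊤ : ℕ∞) X) (hU : ContDiff ℝ (⊤ : ℕ∞) U)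
    (hΦ : ContDiff ℝ (⊤ : ℕ∞) Φ) (hF : ContDiff ℝ (⊤ : ℕ∞) F) :
    ((∀ q : E4,
        (pd (0,1,0,0) U q + pd (0,0,1,0) U q * q.2.2.2) * pd (0,0,0,1) X q
          = (pd (0,1,0,0) X q + pd (0,0,1,0) X q * q.2.2.2) * pd (0,0,0,1) U q) ∧
      (∀ q : E4,
        pd (0,1,0,0) Φ q + U q * pd (0,1,0,0) X q
          + (pd (0,0,1,0) Φ q + U q * pd (0,0,1,0) X q) * q.2.2.2 = F q) ∧
      (∀ q : E4, pd (0,0,0,1) Φ q + U q * pd (0,0,0,1) X q = 0)) ↔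
    ((∀ q : E4,
        pd (0,1,0,0) Φ q + U q * pd (0,1,0,0) X q = F q - q.2.2.2 * pd (0,0,0,1) F q) ∧
      (∀ q : E4,
        pd (0,0,1,0) Φ q + U q * pd (0,0,1,0) X q = pd (0,0,0,1) F q) ∧
      (∀ q : E4, pd (0,0,0,1) Φ q + U q * pd (0,0,0,1) X q = 0)) := by
  have hdU : Differentiable ℝ U := hU.differentiable (by simp)
  have dXx := pd_diff hX ((0,1,0,0) : E4)
  have dXv := pd_diff hX ((0,0,1,0) : E4)
  have dXp := pd_diff hX ((0,0,0,1) : E4)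
  have dΦx := pd_diff hΦ ((0,1,0,0) : E4)
  have dΦv := pd_diff hΦ ((0,0,1,0) : E4)
  have dΦp := pd_diff hΦ ((0,0,0,1) : E4)
  have dFp := pd_diff hF ((0,0,0,1) : E4)
  have hdF : Differentiable ℝ F := hF.differentiable (by simp)
  constructor
  · rintro ⟨hc, h1, h2⟩
    have G : ∀ q : E4,
        pd (0,0,1,0) Φ q + U q * pd (0,0,1,0) X q = pd (0,0,0,1) F q := by
      intro q
      have E1 := pd_congr
        (f := fun y => pd (0,1,0,0) Φ y + U y * pd (0,1,0,0) X y
          + (pd (0,0,1,0) Φ y + U y * pd (0,0,1,0) X y) * y.2.2.2) (g := F) h1 (0,0,0,1) q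
      rw [pd_expand9 dΦx hdU dXx dΦv dXv (0,0,0,1) q] at E1
      have E2 := pd_congr
        (f := fun y => pd (0,0,0,1) Φ y + U y * pd (0,0,0,1) X y)
        (g := fun _ => (0:ℝ)) h2 (0,1,0,0) q
      rw [pd_expand_ac dΦp hdU dXp (0,1,0,0) q, pd_const] at E2
      have E3 := pd_congr
        (f := fun y => pd (0,0,0,1) Φ y + U y * pd (0,0,0,1) X y)
        (g := fun _ => (0:ℝ)) h2 (0,0,1,0) q
      rw [pd_expand_ac dΦp hdU dXp (0,0,1,0) q, pd_const] at E3
      rw [pd_comm hΦ (0,1,0,0) (0,0,0,1) q, pd_comm hX (0,1,0,0) (0,0,0,1) q] at E1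
      rw [pd_comm hΦ (0,0,1,0) (0,0,0,1) q, pd_comm hX (0,0,1,0) (0,0,0,1) q] at E1
      simp only [] at E1 E2 E3
      linear_combination E1 - E2 - q.2.2.2 * E3 + hc q
    refine ⟨fun q => ?_, G, h2⟩
    linear_combination h1 q - q.2.2.2 * G q
  · rintro ⟨h1, h2, h3⟩
    refine ⟨fun q => ?_, fun q => by linear_combination h1 q + q.2.2.2 * h2 q, h3⟩
    have R1 := pd_congr
      (f := fun y => pd (0,1,0,0) Φ y + U y * pd (0,1,0,0) X y)
      (g := fun y => F y - y.2.2.2 * pd (0,0,0,1) F y) h1 (0,0,0,1) q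
    rw [pd_expand_ac dΦx hdU dXx (0,0,0,1) q, pd_expandF hdF dFp (0,0,0,1) q] at R1
    have R2 := pd_congr
      (f := fun y => pd (0,0,1,0) Φ y + U y * pd (0,0,1,0) X y)
      (g := pd (0,0,0,1) F) h2 (0,0,0,1) q
    rw [pd_expand_ac dΦv hdU dXv (0,0,0,1) q] at R2
    have R3 := pd_congr
      (f := fun y => pd (0,0,0,1) Φ y + U y * pd (0,0,0,1) X y)
      (g := fun _ => (0:ℝ)) h3 (0,1,0,0) q
    rw [pd_expand_ac dΦp hdU dXp (0,1,0,0) q, pd_const] at R3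
    have R4 := pd_congr
      (f := fun y => pd (0,0,0,1) Φ y + U y * pd (0,0,0,1) X y)
      (g := fun _ => (0:ℝ)) h3 (0,0,1,0) q
    rw [pd_expand_ac dΦp hdU dXp (0,0,1,0) q, pd_const] at R4
    rw [pd_comm hΦ (0,1,0,0) (0,0,0,1) q, pd_comm hX (0,1,0,0) (0,0,0,1) q] at R1
    rw [pd_comm hΦ (0,0,1,0) (0,0,0,1) q, pd_comm hX (0,0,1,0) (0,0,0,1) q] at R2
    simp only [] at R1 R2 R3 R4
    linear_combination R3 - R1 + q.2.2.2 * (R4 - R2)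

section Slices

variable (X : ℝ → ℝ → ℝ → ℝ → ℝ)

lemma deriv_slice_x
    (hX : Differentiable ℝ (fun q : E4 => X q.1 q.2.1 q.2.2.1 q.2.2.2)) (t x v p : ℝ) :
    deriv (fun y => X t y v p) x
      = pd (0,1,0,0) (fun q : E4 => X q.1 q.2.1 q.2.2.1 q.2.2.2) (t, x, v, p) := by
  have hg : HasDerivAt (fun y : ℝ => ((t, y, v, p) : E4)) ((0,1,0,0) : E4) x :=
    HasDerivAt.prodMk (hasDerivAt_const x t) (HasDerivAt.prodMk (hasDerivAt_id' x)
      (HasDerivAt.prodMk (hasDerivAt_const x v) (hasDerivAt_const x p)))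
  exact ((hX (t, x, v, p)).hasFDerivAt.comp_hasDerivAt x hg).deriv

lemma deriv_slice_v
    (hX : Differentiable ℝ (fun q : E4 => X q.1 q.2.1 q.2.2.1 q.2.2.2)) (t x v p : ℝ) :
    deriv (fun w => X t x w p) v
      = pd (0,0,1,0) (fun q : E4 => X q.1 q.2.1 q.2.2.1 q.2.2.2) (t, x, v, p) := by
  have hg : HasDerivAt (fun w : ℝ => ((t, x, w, p) : E4)) ((0,0,1,0) : E4) v :=
    HasDerivAt.prodMk (hasDerivAt_const v t) (HasDerivAt.prodMk (hasDerivAt_const v x)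
      (HasDerivAt.prodMk (hasDerivAt_id' v) (hasDerivAt_const v p)))
  exact ((hX (t, x, v, p)).hasFDerivAt.comp_hasDerivAt v hg).deriv

lemma deriv_slice_p
    (hX : Differentiable ℝ (fun q : E4 => X q.1 q.2.1 q.2.2.1 q.2.2.2)) (t x v p : ℝ) :
    deriv (X t x v) p
      = pd (0,0,0,1) (fun q : E4 => X q.1 q.2.1 q.2.2.1 q.2.2.2) (t, x, v, p) := by
  have hg : HasDerivAt (fun w : ℝ => ((t, x, v, w) : E4)) ((0,0,0,1) : E4) p :=
    HasDerivAt.prodMk (hasDerivAt_const p t) (HasDerivAt.prodMk (hasDerivAt_const p x)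
      (HasDerivAt.prodMk (hasDerivAt_const p v) (hasDerivAt_id' p)))
  exact ((hX (t, x, v, p)).hasFDerivAt.comp_hasDerivAt p hg).deriv

end Slices

end SystemsEquivAux

/-- Equivalence of systems (9)+(contact condition) and (10) in the proof of
Lemma 5. Variables (t,x,v,p) stand for (t,x,u,u_x). -/
theorem systems_equivalence
    (X U Φ F : ℝ → ℝ → ℝ → ℝ → ℝ)
    (hX : ContDiff ℝ (⊤ : ℕ∞) (fun q : ℝ × ℝ × ℝ × ℝ => X q.1 q.2.1 q.2.2.1 q.2.2.2))
    (hU : ContDiff ℝ (⊤ : ℕ∞) (fun q : ℝ × ℝ × ℝ × ℝ => U q.1 q.2.1 q.2.2.1 q.2.2.2))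
    (hΦ : ContDiff ℝ (⊤ : ℕ∞) (fun q : ℝ × ℝ × ℝ × ℝ => Φ q.1 q.2.1 q.2.2.1 q.2.2.2))
    (hF : ContDiff ℝ (⊤ : ℕ∞) (fun q : ℝ × ℝ × ℝ × ℝ => F q.1 q.2.1 q.2.2.1 q.2.2.2)) :
    ((∀ t x v p : ℝ,
        (deriv (fun y => U t y v p) x + deriv (fun w => U t x w p) v * p) *
            deriv (X t x v) p
          = (deriv (fun y => X t y v p) x + deriv (fun w => X t x w p) v * p) *
            deriv (U t x v) p) ∧
      (∀ t x v p : ℝ,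
        deriv (fun y => Φ t y v p) x + U t x v p * deriv (fun y => X t y v p) x
          + (deriv (fun w => Φ t x w p) v
              + U t x v p * deriv (fun w => X t x w p) v) * p
          = F t x v p) ∧
      (∀ t x v p : ℝ,
        deriv (Φ t x v) p + U t x v p * deriv (X t x v) p = 0)) ↔
    ((∀ t x v p : ℝ,
        deriv (fun y => Φ t y v p) x + U t x v p * deriv (fun y => X t y v p) x
          = F t x v p - p * deriv (F t x v) p) ∧
      (∀ t x v p : ℝ,
        deriv (fun w => Φ t x w p) v + U t x v p * deriv (fun w => X t x w p) v
          = deriv (F t x v) p) ∧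
      (∀ t x v p : ℝ,
        deriv (Φ t x v) p + U t x v p * deriv (X t x v) p = 0)) := by
  have hdX := hX.differentiable (by simp)
  have hdU := hU.differentiable (by simp)
  have hdΦ := hΦ.differentiable (by simp)
  have hdF := hF.differentiable (by simp)
  have K := key _ _ _ _ hX hU hΦ hF
  simp only [deriv_slice_x X hdX, deriv_slice_v X hdX, deriv_slice_p X hdX,
    deriv_slice_x U hdU, deriv_slice_v U hdU, deriv_slice_p U hdU,
    deriv_slice_x Φ hdΦ, deriv_slice_v Φ hdΦ, deriv_slice_p Φ hdΦ,
    deriv_slice_p F hdF]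
  constructor
  · rintro ⟨c1, c2, c3⟩
    obtain ⟨d1, d2, d3⟩ := K.mp
      ⟨fun q => c1 q.1 q.2.1 q.2.2.1 q.2.2.2, fun q => c2 q.1 q.2.1 q.2.2.1 q.2.2.2,
        fun q => c3 q.1 q.2.1 q.2.2.1 q.2.2.2⟩
    exact ⟨fun t x v p => d1 (t, x, v, p), fun t x v p => d2 (t, x, v, p),
      fun t x v p => d3 (t, x, v, p)⟩
  · rintro ⟨c1, c2, c3⟩
    obtain ⟨d1, d2, d3⟩ := K.mpr
      ⟨fun q => c1 q.1 q.2.1 q.2.2.1 q.2.2.2, fun q => c2 q.1 q.2.1 q.2.2.1 q.2.2.2,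
        fun q => c3 q.1 q.2.1 q.2.2.1 q.2.2.2⟩
    exact ⟨fun t x v p => d1 (t, x, v, p), fun t x v p => d2 (t, x, v, p),
      fun t x v p => d3 (t, x, v, p)⟩
end
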